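/- Let D be a digraph of order n ≥ 3 containing a cycle C = x_1 x_2 … x_{n−1} x_1 with y the vertex not on C. If D contains no Hamiltonian bypass and there is an index k with x_k y ∈ A(D) and y x_{k+1} ∈ A(D), then x_{i+1} x_i ∉ A(D) for every i ≠ k (indices modulo n−1). -/

import Mathlib

/-! Inserting `y` between `x_k` and `x_{k+1}` turns `C` into the Hamiltonian cycle
`y x_{k+1} … x_k y`. For `i ≠ k` the arc `x_i x_{i+1}` lies on this cycle, so an arc
`x_{i+1} x_i` would close the Hamiltonian path `x_{i+1} … x_i` (the cycle read from `x_{i+1}`)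
into a Hamiltonian bypass. -/

open Finset

/-- A list of distinct vertices whose consecutive members are joined by arcs. -/
def IsPathList {V : Type*} (A : V → V → Prop) (p : List V) : Prop :=
  p.Nodup ∧ p.Chain' A

/-- A directed cycle: at least two distinct vertices, consecutive arcs, and an arc
from the last vertex back to the first. -/
def IsCycleList {V : Type*} (A : V → V → Prop) (c : List V) : Prop :=
  2 ≤ c.length ∧ c.Nodup ∧ c.Chain' A ∧ ∀ h : c ≠ [], A (c.getLast h) (c.head h)

/-- A Hamiltonian bypass: a Hamiltonian path `v₁ v₂ … vₙ` together with the arc `v₁ vₙ`. -/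
def HasHamBypass {V : Type*} (A : V → V → Prop) : Prop :=
  ∃ l : List V, l.Nodup ∧ (∀ v, v ∈ l) ∧ l.Chain' A ∧
    ∀ h : l ≠ [], A (l.head h) (l.getLast h)

/-- A Hamiltonian cycle. -/
def HasHamCycle {V : Type*} (A : V → V → Prop) : Prop :=
  ∃ c : List V, IsCycleList A c ∧ ∀ v, v ∈ c

/-- out-degree of `x` towards a set `S`. -/
def outDegOn {V : Type*} [DecidableEq V] (A : V → V → Prop) [DecidableRel A]
    (x : V) (S : Finset V) : ℕ := (S.filter fun y => A x y).card

/-- in-degree of `x` from a set `S`. -/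
def inDegOn {V : Type*} [DecidableEq V] (A : V → V → Prop) [DecidableRel A]
    (x : V) (S : Finset V) : ℕ := (S.filter fun y => A y x).card

/-- degree of `x` with respect to a set `S` (arcs in both directions). -/
def degOn {V : Type*} [DecidableEq V] (A : V → V → Prop) [DecidableRel A]
    (x : V) (S : Finset V) : ℕ := outDegOn A x S + inDegOn A x S

/-- out-degree of `x`. -/
def outDeg {V : Type*} [Fintype V] [DecidableEq V] (A : V → V → Prop) [DecidableRel A]
    (x : V) : ℕ := outDegOn A x Finset.univ

/-- in-degree of `x`. -/
def inDeg {V : Type*} [Fintype V] [DecidableEq V] (A : V → V → Prop) [DecidableRel A]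
    (x : V) : ℕ := inDegOn A x Finset.univ

/-- degree of `x`. -/
def deg {V : Type*} [Fintype V] [DecidableEq V] (A : V → V → Prop) [DecidableRel A]
    (x : V) : ℕ := outDeg A x + inDeg A x

/-- The condition `A_k` of Manoussakis: for every triple of distinct vertices `x, y, z`
with `x` and `y` non-adjacent, if `xz` is not an arc then
`d(x)+d(y)+d⁺(x)+d⁻(z) ≥ 3n-2+k`, and if `zx` is not an arc then
`d(x)+d(y)+d⁻(x)+d⁺(z) ≥ 3n-2+k`. -/
def CondA {V : Type*} [Fintype V] [DecidableEq V] (A : V → V → Prop) [DecidableRel A]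
    (k : ℤ) : Prop :=
  ∀ x y z : V, x ≠ y → z ≠ x → z ≠ y → ¬A x y → ¬A y x →
    (¬A x z → (deg A x + deg A y + outDeg A x + inDeg A z : ℤ) ≥
      3 * (Fintype.card V : ℤ) - 2 + k) ∧
    (¬A z x → (deg A x + deg A y + inDeg A x + outDeg A z : ℤ) ≥
      3 * (Fintype.card V : ℤ) - 2 + k)

namespace List

variable {α : Type*}

theorem cycleChain_coe_iff {R : α → α → Prop} {l : List α} (hl : l ≠ []) :
    Cycle.Chain R (l : Cycle α) ↔ l.IsChain R ∧ R (l.getLast hl) (l.head hl) := by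
  rw [Cycle.chain_ne_nil R hl, isChain_cons, head?_eq_some_head hl]
  simp [and_comm]

theorem exists_eq_append_getElem_cons_getElem_cons (l : List α) {j : ℕ}
    (hj : j + 1 < l.length) : ∃ s t, l = s ++ l[j] :: l[j + 1] :: t :=
  ⟨l.take j, l.drop (j + 2), by
    rw [← drop_eq_getElem_cons, ← drop_eq_getElem_cons, take_append_drop]⟩

theorem Nodup.mem_of_length_eq_card [Fintype α] {l : List α} (hl : l.Nodup)
    (hlen : l.length = Fintype.card α) (a : α) : a ∈ l := by
  classical
  rw [← mem_toFinset, Finset.eq_univ_of_card _ ((toFinset_card_of_nodup hl).trans hlen)]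
  exact Finset.mem_univ a

end List

section

variable {V : Type*} {A : V → V → Prop}

theorem isCycleList_iff {c : List V} :
    IsCycleList A c ↔ 2 ≤ c.length ∧ c.Nodup ∧ Cycle.Chain A (c : Cycle V) := by
  refine ⟨fun ⟨h2, hnd, hch, hl⟩ => ?_, fun ⟨h2, hnd, hch⟩ => ?_⟩
  all_goals have hne : c ≠ [] := List.ne_nil_of_length_pos (by omega)
  · exact ⟨h2, hnd, (List.cycleChain_coe_iff hne).2 ⟨hch, hl hne⟩⟩
  · obtain ⟨hch, hl⟩ := (List.cycleChain_coe_iff hne).1 hch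
    exact ⟨h2, hnd, hch, fun _ => hl⟩

theorem IsCycleList.of_isRotated {c c' : List V} (hc : IsCycleList A c) (h : c ~r c') :
    IsCycleList A c' := by
  rw [isCycleList_iff] at hc ⊢
  obtain ⟨h2, hnd, hch⟩ := hc
  exact ⟨h.perm.length_eq ▸ h2, h.nodup_iff.1 hnd, Cycle.coe_eq_coe.2 h ▸ hch⟩

theorem IsCycleList.cons {c : List V} {y : V} (hc : IsCycleList A c) (hy : y ∉ c)
    (hin : ∀ x ∈ c.getLast?, A x y) (hout : ∀ x ∈ c.head?, A y x) :
    IsCycleList A (y :: c) := by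
  obtain ⟨h2, hnd, hch, -⟩ := hc
  have hne : c ≠ [] := List.ne_nil_of_length_pos (by omega)
  refine ⟨by rw [List.length_cons]; omega, List.nodup_cons.2 ⟨hy, hnd⟩, hch.cons hout,
    fun _ => ?_⟩
  rw [List.getLast_cons hne, List.head_cons]
  exact hin _ (List.getLast?_eq_some_getLast hne)

theorem hasHamBypass_of_isCycleList_append {s t : List V} {u v : V}
    (hH : IsCycleList A (s ++ u :: v :: t)) (hall : ∀ w, w ∈ s ++ u :: v :: t)
    (hvu : A v u) : HasHamBypass A := by
  have hrot : s ++ u :: v :: t ~r (v :: t) ++ (s ++ [u]) := by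
    simpa using List.isRotated_append (l := s ++ [u]) (l' := v :: t)
  obtain ⟨-, hnd, hch, -⟩ := hH.of_isRotated hrot
  exact ⟨_, hnd, fun w => hrot.mem_iff.1 (hall w), hch, fun _ => by simpa using hvu⟩

theorem IsCycleList.cons_rotate {l : List V} {y : V} {k : ℕ} (hl : IsCycleList A l)
    (hy : y ∉ l) (hk : k < l.length) (hin : A l[k] y)
    (hout : A y (l[(k + 1) % l.length]'(Nat.mod_lt _ (by omega)))) :
    IsCycleList A (y :: l.rotate (k + 1)) := by
  have hlen : (l.rotate (k + 1)).length = l.length := List.length_rotate l (k + 1)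
  have hlast : (l.rotate (k + 1)).getLast? = some l[k] := by
    rw [List.getLast?_eq_getElem?, hlen, List.getElem?_eq_getElem (by omega),
      List.getElem_rotate]
    simp only [show l.length - 1 + (k + 1) = k + l.length by omega, Nat.add_mod_right,
      Nat.mod_eq_of_lt hk]
  have hhead :
      (l.rotate (k + 1)).head? = some (l[(k + 1) % l.length]'(Nat.mod_lt _ (by omega))) := by
    rw [List.head?_eq_getElem?, List.getElem?_eq_getElem (by omega), List.getElem_rotate,
      zero_add]
  refine (hl.of_isRotated (List.IsRotated.forall l _).symm).cons (by simpa using hy) ?_ ?_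
  · simpa [hlast] using hin
  · simpa [hhead] using hout

end

theorem exists_add_succ_mod_eq_of_ne {m i k : ℕ} (hi : i < m) (hk : k < m) (hik : i ≠ k) :
    ∃ j, j + 1 < m ∧ (j + (k + 1)) % m = i := by
  rcases lt_or_gt_of_ne hik with h | h
  · exact ⟨i + m - (k + 1), by omega, by
      rw [show i + m - (k + 1) + (k + 1) = i + m by omega, Nat.add_mod_right,
        Nat.mod_eq_of_lt hi]⟩
  · exact ⟨i - (k + 1), by omega, by rw [Nat.sub_add_cancel h, Nat.mod_eq_of_lt hi]⟩

/-- Lemma 7(iii). -/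
theorem stmt9 {V : Type*} [Fintype V] (A : V → V → Prop)
    (c : List V) (hc : IsCycleList A c) (hlen : c.length = Fintype.card V - 1)
    (y : V) (hy : y ∉ c)
    (hnb : ¬HasHamBypass A)
    (k : ℕ) (hk : k < c.length)
    (h1 : A (c.get ⟨k, hk⟩) y)
    (h2 : A y (c.get ⟨(k + 1) % c.length, Nat.mod_lt _ (by omega)⟩)) :
    ∀ i : ℕ, ∀ hi : i < c.length, i ≠ k →
      ¬A (c.get ⟨(i + 1) % c.length, Nat.mod_lt _ (by omega)⟩) (c.get ⟨i, hi⟩) := by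
  intro i hi hik hback
  simp only [List.get_eq_getElem] at h1 h2 hback
  have hH := hc.cons_rotate hy hk h1 h2
  have hlen_rot := List.length_rotate c (k + 1)
  have hall : ∀ w, w ∈ y :: c.rotate (k + 1) := by
    have := Fintype.card_pos_iff.2 ⟨y⟩
    have hcard : (y :: c).length = Fintype.card V := by rw [List.length_cons]; omega
    simpa using (List.nodup_cons.2 ⟨hy, hc.2.1⟩).mem_of_length_eq_card hcard
  obtain ⟨j, hj, hji⟩ := exists_add_succ_mod_eq_of_ne hi hk hik
  obtain ⟨s, t, hst⟩ :=
    (c.rotate (k + 1)).exists_eq_append_getElem_cons_getElem_cons (j := j) (by omega)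
  rw [hst, ← List.cons_append] at hH hall
  refine hnb (hasHamBypass_of_isCycleList_append hH hall ?_)
  have hsucc : (j + 1 + (k + 1)) % c.length = (i + 1) % c.length := by
    rw [show j + 1 + (k + 1) = j + (k + 1) + 1 by omega, ← Nat.mod_add_mod, hji]
  simpa only [List.getElem_rotate, hji, hsucc] using hback
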